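/- arXiv:1007.2845 — 8 statements merged into one kernel-verified Lean document; each statement's English description precedes it below -/
import Mathlib

section
/- If G is a group presented by generators X and relators R (with |X| finite), and exactly s of the relators are not p-th powers of elements of the free group F(X), then the dimension of G/(G'G^p) as a vector space over F_p is at least |X| - s. -/
/-!
The mod-`p` abelianization maps `F(X)` onto `𝔽_p^X` and kills every `p`-th power, so it sends
every relator into the span `W` of the images of the `s` relators that are not `p`-th powers.
As `dim W ≤ s`, the quotient `𝔽_p^X / W` has dimension at least `|X| - s`; projecting it onto
`|X| - s` coordinates gives a surjection from `G` onto `C_p^(|X| - s)`.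
-/

open Module Submodule

namespace FreeGroup

variable {X : Type*} [DecidableEq X] (n : ℕ)

/-- The mod-`n` abelianization `F(X) → F(X) / F(X)' F(X)ⁿ ≅ (ℤ/n)^X`. -/
def toPiZMod : FreeGroup X →* Multiplicative (X → ZMod n) :=
  FreeGroup.lift fun x => .ofAdd (Pi.single x 1)

theorem toPiZMod_surjective [Finite X] : Function.Surjective (toPiZMod (X := X) n) := by
  let rangeSpan : Submodule (ZMod n) (X → ZMod n) :=
    AddSubgroup.toZModSubmodule n (toPiZMod (X := X) n).range.toAddSubgroup'
  have rangeSpan_eq_top : rangeSpan = ⊤ := by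
    rw [eq_top_iff, ← (Pi.basisFun (ZMod n) X).span_eq, span_le]
    rintro _ ⟨x, rfl⟩
    exact ⟨of x, by simp [toPiZMod]; rfl⟩
  intro y
  exact (rangeSpan_eq_top ▸ mem_top : Multiplicative.toAdd y ∈ rangeSpan)

theorem toPiZMod_pow_self (v : FreeGroup X) : toPiZMod n (v ^ n) = 1 := by
  rw [map_pow, ← ofAdd_toAdd (toPiZMod n v), ← ofAdd_nsmul, ← Nat.cast_smul_eq_nsmul (ZMod n),
    ZMod.natCast_self, zero_smul, ofAdd_zero]

theorem toPiZMod_mem_span_image {R S : Set (FreeGroup X)}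
    (hS : ∀ r ∈ R, (¬∃ v : FreeGroup X, v ^ n = r) → r ∈ S) {r : FreeGroup X} (hr : r ∈ R) :
    (toPiZMod n r).toAdd ∈ span (ZMod n) ((fun r => (toPiZMod n r).toAdd) '' S) := by
  by_cases hrS : r ∈ S
  · exact subset_span ⟨r, hrS, rfl⟩
  · obtain ⟨v, rfl⟩ := not_not.mp (mt (hS r hr) hrS)
    rw [toPiZMod_pow_self]
    exact zero_mem _

end FreeGroup

theorem PresentedGroup.exists_surjective_of_surjective {X G : Type*} [Group G]
    {R : Set (FreeGroup X)} (f : FreeGroup X →* G) (hf : Function.Surjective f)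
    (hR : ∀ r ∈ R, f r = 1) : ∃ g : PresentedGroup R →* G, Function.Surjective g :=
  ⟨QuotientGroup.lift _ f (Subgroup.normalClosure_le_normal hR),
    QuotientGroup.lift_surjective_of_surjective _ f hf _⟩

section LinearAlgebra

variable {R K V α : Type*}

theorem finrank_span_image_le_card [Ring R] [StrongRankCondition R] [AddCommGroup V] [Module R V]
    {S : Set α} (hS : S.Finite) (g : α → V) :
    finrank R (span R (g '' S)) ≤ hS.toFinset.card := by
  classical
  have : g '' S = ↑(hS.toFinset.image g) := by simp
  rw [this]
  exact (finrank_span_finset_le_card (R := R) _).trans Finset.card_image_le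

variable [Field K] [AddCommGroup V] [Module K V] [FiniteDimensional K V]

theorem exists_linearMap_fin_surjective_of_le_finrank {k : ℕ} (hk : k ≤ finrank K V) :
    ∃ L : V →ₗ[K] (Fin k → K), Function.Surjective L :=
  ⟨LinearMap.funLeft K K (Fin.castLE hk) ∘ₗ (finBasis K V).equivFun.toLinearMap,
    (LinearMap.funLeft_surjective_of_injective K K _ (Fin.castLE_injective hk)).comp
      (finBasis K V).equivFun.surjective⟩

theorem Submodule.exists_linearMap_fin_surjective_le_ker (W : Submodule K V) {k : ℕ}
    (hk : k + finrank K W ≤ finrank K V) :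
    ∃ L : V →ₗ[K] (Fin k → K), Function.Surjective L ∧ W ≤ LinearMap.ker L := by
  have hk' : k ≤ finrank K (V ⧸ W) := by
    have := W.finrank_quotient_add_finrank
    omega
  obtain ⟨L, hL⟩ := exists_linearMap_fin_surjective_of_le_finrank hk'
  refine ⟨L ∘ₗ W.mkQ, hL.comp W.mkQ_surjective, fun w hw => ?_⟩
  simp [(Quotient.mk_eq_zero W).mpr hw]

end LinearAlgebra

theorem dim_ge_card_sub_s_general {X : Type} [Fintype X] (p : ℕ) (hp : p.Prime)
    (R : Set (FreeGroup X)) (S : Set (FreeGroup X))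
    (hchar : ∀ r ∈ R, r ∈ S ↔ ¬∃ v : FreeGroup X, v ^ p = r)
    (hfin : S.Finite) (s : ℕ) (hcard : hfin.toFinset.card = s) :
    ∃ f : PresentedGroup R →* (Fin (Fintype.card X - s) → Multiplicative (ZMod p)),
      Function.Surjective f := by
  classical
  have : Fact p.Prime := ⟨hp⟩
  set W := span (ZMod p) ((fun r => (FreeGroup.toPiZMod p r).toAdd) '' S)
  have hW : finrank (ZMod p) W ≤ s := hcard ▸ finrank_span_image_le_card hfin _
  obtain ⟨L, hL, hWL⟩ := W.exists_linearMap_fin_surjective_le_ker (k := Fintype.card X - s)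
    (by have := W.finrank_le; rw [finrank_fintype_fun_eq_card] at *; omega)
  let f : FreeGroup X →* (Fin (Fintype.card X - s) → Multiplicative (ZMod p)) :=
    (MulEquiv.funMultiplicative _ _).toMonoidHom.comp
      (L.toAddMonoidHom.toMultiplicative.comp (FreeGroup.toPiZMod p))
  refine PresentedGroup.exists_surjective_of_surjective f ?_ fun r hr => ?_
  · rw [MonoidHom.coe_comp, MonoidHom.coe_comp]
    exact (MulEquiv.surjective _).comp (hL.comp (FreeGroup.toPiZMod_surjective p))
  · have hLr : L (FreeGroup.toPiZMod p r).toAdd = 0 :=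
      hWL (FreeGroup.toPiZMod_mem_span_image p (fun r hr => (hchar r hr).mpr) hr)
    simp [f, hLr]

/-- If `G` is presented by generators `X` (finite) and relators `R`, and exactly `s`
of the relators are not `p`-th powers in the free group `F(X)`, then the `p`-rank of `G`
(the dimension of `G/(G'Gᵖ)` over `𝔽_p`, equivalently the largest number of copies of `C_p`
onto which `G` surjects) is at least `|X| - s`. -/
theorem dim_ge_card_sub_s {X : Type} [Fintype X] (p : ℕ) (hp : p.Prime)
    (R : Set (FreeGroup X)) (S : Set (FreeGroup X)) (hSR : S ⊆ R)
    (hchar : ∀ r ∈ R, r ∈ S ↔ ¬∃ v : FreeGroup X, v ^ p = r)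
    (hfin : S.Finite) (s : ℕ) (hcard : hfin.toFinset.card = s) :
    ∃ f : PresentedGroup R →* (Fin (Fintype.card X - s) → Multiplicative (ZMod p)),
      Function.Surjective f :=
  dim_ge_card_sub_s_general p hp R S hchar hfin s hcard
end

section
/- If G is a group with p-rank d_p(G) ≤ 1, then G is not p-large. -/
/-!
Compose a surjection `N ↠ F₂` with `F₂ ↠ (ℤ/p)²` and let `C` be the normal core in `G` of its
kernel. Since `N` has `p`-power index and `p`-th powers of elements of `N` lie in `C`, the group
`G ⧸ C` is a finite `p`-group, and like `G` it has no quotient `(ℤ/p)²`.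

Such a finite `p`-group `P` is cyclic: `P ⧸ Z(P)` is cyclic by induction, so `P` is abelian; then
`P ⧸ P^p` is an `𝔽_p`-vector space of dimension at most one, hence cyclic, and any `g` lifting a
generator generates `P`, because every element of `P ⧸ ⟨g⟩` is a `p`-th power while the `p`-th
power map of a nontrivial `p`-group is never onto.

But then `(ℤ/p)²` is a quotient of the image of `N` in the cyclic group `G ⧸ C`, which is absurd.
-/

open Function

/-- A group `G` is `p`-large if some normal subgroup of index a power of `p`
surjects onto a non-abelian free group (equivalently, onto `F₂`). -/
def IsPLarge (p : ℕ) (G : Type*) [Group G] : Prop :=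
  ∃ N : Subgroup G, N.Normal ∧ (∃ k : ℕ, N.index = p ^ k) ∧
    ∃ f : N →* FreeGroup (Fin 2), Function.Surjective f

/-- `d_p(G) ≤ 1`: `G` has no quotient isomorphic to `C_p × C_p`. -/
def PRankLeOne (p : ℕ) (G : Type*) [Group G] : Prop :=
  ¬∃ f : G →* (Fin 2 → Multiplicative (ZMod p)), Surjective f

theorem PRankLeOne.of_surjective {p : ℕ} {G H : Type*} [Group G] [Group H] {f : G →* H}
    (hf : Surjective f) (h : PRankLeOne p G) : PRankLeOne p H :=
  fun ⟨g, hg⟩ => h ⟨g.comp f, hg.comp hf⟩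

theorem FreeGroup.exists_surjective_fin_two_zmod (n : ℕ) :
    ∃ s : FreeGroup (Fin 2) →* (Fin 2 → Multiplicative (ZMod n)), Surjective s := by
  refine ⟨FreeGroup.lift fun i => Pi.mulSingle i (Multiplicative.ofAdd 1), fun t => ?_⟩
  refine ⟨FreeGroup.of 0 ^ (ZMod.cast (t 0).toAdd : ℤ) *
    FreeGroup.of 1 ^ (ZMod.cast (t 1).toAdd : ℤ), ?_⟩
  ext j
  fin_cases j <;> simp [← ofAdd_zsmul]

theorem pi_multiplicative_zmod_pow_eq_one {ι : Type*} (n : ℕ) (t : ι → Multiplicative (ZMod n)) :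
    t ^ n = 1 := by
  ext i
  simp

theorem not_isCyclic_fin_two_zmod (p : ℕ) [hp : Fact p.Prime] :
    ¬ IsCyclic (Fin 2 → Multiplicative (ZMod p)) := by
  intro h
  have hdvd : Monoid.exponent (Fin 2 → Multiplicative (ZMod p)) ∣ p :=
    Monoid.exponent_dvd_of_forall_pow_eq_one (pi_multiplicative_zmod_pow_eq_one p)
  rw [h.exponent_eq_card, Nat.card_pi] at hdvd
  simp only [Nat.card_eq_fintype_card, Fintype.card_multiplicative, ZMod.card, Finset.prod_const,
    Finset.card_univ, Fintype.card_fin] at hdvd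
  nlinarith [Nat.le_of_dvd hp.out.pos hdvd, hp.out.two_le]

theorem Module.exists_surjective_fin {K V : Type*} [DivisionRing K] [AddCommGroup V] [Module K V]
    [Module.Finite K V] {n : ℕ} (h : n ≤ Module.finrank K V) :
    ∃ f : V →ₗ[K] (Fin n → K), Surjective f :=
  ⟨(LinearMap.funLeft K K (Fin.castLE h)).comp (Module.finBasis K V).equivFun.toLinearMap,
    (LinearMap.funLeft_surjective_of_injective K K _ (Fin.castLE_injective h)).comp
      (Module.finBasis K V).equivFun.surjective⟩

theorem isCyclic_of_pow_eq_one_of_pRankLeOne {p : ℕ} [Fact p.Prime] {B : Type*} [CommGroup B]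
    [Finite B] (hB : ∀ b : B, b ^ p = 1) (h : PRankLeOne p B) : IsCyclic B := by
  have : Module (ZMod p) (Additive B) := AddCommGroup.zmodModule hB
  have hdim : Module.finrank (ZMod p) (Additive B) ≤ 1 := by
    by_contra! hdim
    obtain ⟨f, hf⟩ := Module.exists_surjective_fin (K := ZMod p) hdim
    exact h ⟨(MulEquiv.funMultiplicative (Fin 2) (ZMod p)).toMonoidHom.comp
      (AddMonoidHom.toMultiplicativeRight f.toAddMonoidHom),
      (MulEquiv.funMultiplicative _ _).surjective.comp
        (Multiplicative.ofAdd.surjective.comp (hf.comp Additive.ofMul.surjective))⟩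
  obtain ⟨v, hv⟩ := finrank_le_one_iff.mp hdim
  refine ⟨v.toMul, fun b => ?_⟩
  obtain ⟨c, hc⟩ := hv (Additive.ofMul b)
  rw [← ZMod.natCast_zmod_val c, Nat.cast_smul_eq_nsmul] at hc
  rw [← toMul_ofMul b, ← hc, toMul_nsmul]
  exact Subgroup.npow_mem_zpowers _ _

namespace IsPGroup

variable {p : ℕ} [hp : Fact p.Prime]

theorem subsingleton_of_surjective_pow {Q : Type*} [Group Q] [Finite Q] (hQ : IsPGroup p Q)
    (h : Surjective fun x : Q => x ^ p) : Subsingleton Q := by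
  refine not_nontrivial_iff_subsingleton.mp fun _ => ?_
  obtain ⟨g, hg⟩ :=
    exists_prime_orderOf_dvd_card' p (hQ.card_eq_or_dvd.resolve_left Finite.one_lt_card.ne')
  have : g = 1 := Finite.injective_iff_surjective.mpr h <| by
    simp only [hg ▸ pow_orderOf_eq_one g, one_pow]
  exact hp.out.one_lt.ne' (hg ▸ this ▸ orderOf_one)

theorem isCyclic_of_pRankLeOne_of_comm {Q : Type*} [CommGroup Q] [Finite Q] (hQ : IsPGroup p Q)
    (h : PRankLeOne p Q) : IsCyclic Q := by
  set R := (powMonoidHom p : Q →* Q).range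
  have : IsCyclic (Q ⧸ R) := isCyclic_of_pow_eq_one_of_pRankLeOne
    (QuotientGroup.forall_mk.mpr fun x => (QuotientGroup.eq_one_iff _).mpr ⟨x, rfl⟩)
    (h.of_surjective (QuotientGroup.mk'_surjective R))
  obtain ⟨g, hg⟩ := IsCyclic.exists_generator (α := Q ⧸ R)
  obtain ⟨g, rfl⟩ := QuotientGroup.mk_surjective g
  refine isCyclic_iff_exists_zpowers_eq_top.mpr ⟨g, QuotientGroup.subsingleton_iff.mp ?_⟩
  refine (hQ.to_quotient _).subsingleton_of_surjective_pow
    (QuotientGroup.forall_mk.mpr fun x => ?_)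
  obtain ⟨n, hn⟩ := Subgroup.mem_zpowers_iff.mp (hg x)
  obtain ⟨y, hy⟩ : (g ^ n)⁻¹ * x ∈ R := QuotientGroup.eq.mp (by simpa using hn)
  refine ⟨y, ?_⟩
  change ((y ^ p : Q) : Q ⧸ Subgroup.zpowers g) = (x : Q ⧸ Subgroup.zpowers g)
  rw [show y ^ p = (g ^ n)⁻¹ * x from hy, QuotientGroup.eq]
  simp

theorem isCyclic_of_pRankLeOne {Q : Type*} [Group Q] [Finite Q] (hQ : IsPGroup p Q)
    (h : PRankLeOne p Q) : IsCyclic Q := by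
  induction Q using Finite.induction_subsingleton_or_nontrivial generalizing ‹Group Q› with
  | hbase => infer_instance
  | hstep Q ih =>
    have hcard : Nat.card (Q ⧸ Subgroup.center Q) < Nat.card Q := by
      rw [Subgroup.card_eq_card_quotient_mul_card_subgroup (Subgroup.center Q)]
      apply lt_mul_of_one_lt_right Nat.card_pos
      exact (Subgroup.one_lt_card_iff_ne_bot _).mpr hQ.bot_lt_center.ne'
    have : IsCyclic (Q ⧸ Subgroup.center Q) := ih _ hcard (hQ.to_quotient _)
      (h.of_surjective (QuotientGroup.mk'_surjective _))
    let := commGroupOfCyclicCenterQuotient (QuotientGroup.mk' (Subgroup.center Q))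
      (QuotientGroup.ker_mk' _).le
    exact isCyclic_of_pRankLeOne_of_comm hQ h

end IsPGroup

theorem isCyclic_of_surjective_of_ker_le {N H A : Type*} [Group N] [Group H] [Group A] [IsCyclic H]
    (ψ : N →* H) {φ : N →* A} (hφ : Surjective φ) (h : ψ.ker ≤ φ.ker) : IsCyclic A := by
  have : IsCyclic (N ⧸ ψ.ker) :=
    isCyclic_of_surjective _ (QuotientGroup.quotientKerEquivRange ψ).symm.surjective
  refine isCyclic_of_surjective (QuotientGroup.lift ψ.ker φ h) fun a => ?_
  obtain ⟨x, rfl⟩ := hφ a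
  exact ⟨x, rfl⟩

section NormalCore

variable {G A : Type*} [Group G] [Group A] {N : Subgroup G} (φ : N →* A)

theorem pow_mem_normalCore_map_ker [N.Normal] {n : ℕ} (hA : ∀ a : A, a ^ n = 1) {x : G}
    (hx : x ∈ N) : x ^ n ∈ (φ.ker.map N.subtype).normalCore := fun b => by
  rw [← conj_pow]
  refine ⟨⟨b * x * b⁻¹, ‹N.Normal›.conj_mem x hx b⟩ ^ n, ?_, rfl⟩
  simp only [SetLike.mem_coe, MonoidHom.mem_ker, map_pow, hA]

theorem isPGroup_quotient_normalCore_map_ker [N.Normal] {p k : ℕ} (hk : N.index = p ^ k)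
    (hA : ∀ a : A, a ^ p = 1) : IsPGroup p (G ⧸ (φ.ker.map N.subtype).normalCore) := by
  intro q
  induction q using QuotientGroup.induction_on with
  | H g =>
    refine ⟨k + 1, ?_⟩
    rw [← QuotientGroup.mk_pow, QuotientGroup.eq_one_iff, pow_succ, pow_mul]
    exact pow_mem_normalCore_map_ker φ hA (hk ▸ N.pow_index_mem g)

instance finiteIndex_normalCore_map_ker [N.FiniteIndex] [Finite A] :
    (φ.ker.map N.subtype).normalCore.FiniteIndex := by
  have : (φ.ker.map N.subtype).FiniteIndex := ⟨by
    rw [Subgroup.index_map_subtype]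
    exact mul_ne_zero Subgroup.FiniteIndex.index_ne_zero Subgroup.FiniteIndex.index_ne_zero⟩
  infer_instance

theorem ker_mk'_normalCore_map_ker_comp_subtype_le :
    ((QuotientGroup.mk' (φ.ker.map N.subtype).normalCore).comp N.subtype).ker ≤ φ.ker :=
  fun _ hx => (Subgroup.mem_map_iff_mem N.subtype_injective).mp
    (Subgroup.normalCore_le _ ((QuotientGroup.eq_one_iff _).mp hx))

end NormalCore

/-- If the `p`-rank of `G` is at most `1` (i.e. `G` does not surject onto
`C_p × C_p`), then `G` is not `p`-large. -/
theorem not_pLarge_of_pRank_le_one {G : Type*} [Group G] (p : ℕ) (hp : p.Prime)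
    (hrank : ¬∃ f : G →* (Fin 2 → Multiplicative (ZMod p)), Function.Surjective f) :
    ¬ IsPLarge p G := by
  have : Fact p.Prime := ⟨hp⟩
  rintro ⟨N, hN, ⟨k, hk⟩, f, hf⟩
  have : N.FiniteIndex := ⟨hk ▸ pow_ne_zero k hp.ne_zero⟩
  obtain ⟨s, hs⟩ := FreeGroup.exists_surjective_fin_two_zmod p
  set φ := s.comp f
  have hφ : Surjective φ := hs.comp hf
  set C := (φ.ker.map N.subtype).normalCore
  have hC : IsPGroup p (G ⧸ C) :=
    isPGroup_quotient_normalCore_map_ker φ hk (pi_multiplicative_zmod_pow_eq_one p)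
  have : IsCyclic (G ⧸ C) :=
    hC.isCyclic_of_pRankLeOne (PRankLeOne.of_surjective (QuotientGroup.mk'_surjective C) hrank)
  exact not_isCyclic_fin_two_zmod p <| isCyclic_of_surjective_of_ker_le _ hφ
    (ker_mk'_normalCore_map_ker_comp_subtype_le φ)
end

section
/- If G is p-large and H is a finite index subgroup of G, then H is p-large. -/
open ModularGroup MatrixGroups

namespace FreeGroup

theorem commute_of_subsingleton {α : Type*} [Subsingleton α] (x y : FreeGroup α) :
    Commute x y := by
  rcases isEmpty_or_nonempty α with hα | hα
  · exact Subsingleton.elim x y ▸ Commute.refl x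
  · let e : FreeGroup α ≃* Multiplicative ℤ :=
      @mulEquivIntOfUnique α (uniqueOfSubsingleton hα.some)
    simpa using (Commute.all (e x) (e y)).map e.symm

theorem exists_surjective_freeGroup_two {α : Type*} [Nontrivial α] :
    ∃ f : FreeGroup α →* FreeGroup (Fin 2), Function.Surjective f := by
  classical
  obtain ⟨a, b, hab⟩ := exists_pair_ne α
  refine ⟨map fun x => if x = a then 0 else 1, map_surjective ?_⟩
  intro i
  fin_cases i
  · exact ⟨a, by simp⟩
  · exact ⟨b, by simp [hab.symm]⟩

theorem not_commute_of_zero_zpow_of_one_zpow {m n : ℤ} (hm : m ≠ 0) (hn : n ≠ 0) :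
    ¬Commute (of (0 : Fin 2) ^ m) (of 1 ^ n) := by
  intro h
  -- In `SL(2, ℤ)` the images `!![1, m; 0, 1]` and `!![1, 0; -n, 1]` have products whose
  -- `(0, 0)` entries are `1 - m * n` and `1`.
  let φ : FreeGroup (Fin 2) →* SL(2, ℤ) := lift ![T, S * T * S⁻¹]
  have hφm : φ (of 0 ^ m) = T ^ m := by simp [φ]
  have hφn : φ (of 1 ^ n) = S * T ^ n * S⁻¹ := by simp [φ, conj_zpow]
  have h₀₀ := congrArg (fun g : SL(2, ℤ) => (g : Matrix (Fin 2) (Fin 2) ℤ) 0 0) (h.map φ).eq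
  simp only [hφm, hφn] at h₀₀
  simp [coe_T_zpow] at h₀₀
  exact h₀₀.elim hm hn

end FreeGroup

theorem IsFreeGroup.exists_surjective_freeGroup_two_of_not_commute {K : Type*} [Group K]
    [IsFreeGroup K] {x y : K} (hxy : ¬Commute x y) :
    ∃ f : K →* FreeGroup (Fin 2), Function.Surjective f := by
  let e := IsFreeGroup.toFreeGroup K
  have : Nontrivial (IsFreeGroup.Generators K) := by
    by_contra h
    rw [not_nontrivial_iff_subsingleton] at h
    exact hxy (by simpa using (FreeGroup.commute_of_subsingleton (e x) (e y)).map e.symm)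
  obtain ⟨f, hf⟩ := FreeGroup.exists_surjective_freeGroup_two (α := IsFreeGroup.Generators K)
  exact ⟨f.comp e.toMonoidHom, hf.comp e.surjective⟩

namespace Subgroup

theorem FiniteIndex.map_of_surjective {G G' : Type*} [Group G] [Group G'] {f : G →* G'}
    (hf : Function.Surjective f) (K : Subgroup G) [K.FiniteIndex] : (K.map f).FiniteIndex :=
  ⟨fun h => FiniteIndex.index_ne_zero (zero_dvd_iff.mp (h ▸ K.index_map_dvd hf))⟩

theorem exists_surjective_freeGroup_two_of_finiteIndex (K : Subgroup (FreeGroup (Fin 2)))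
    [K.FiniteIndex] : ∃ f : K →* FreeGroup (Fin 2), Function.Surjective f := by
  obtain ⟨m, hm, -, ha⟩ := K.exists_pow_mem_of_index_ne_zero FiniteIndex.index_ne_zero (.of 0)
  obtain ⟨n, hn, -, hb⟩ := K.exists_pow_mem_of_index_ne_zero FiniteIndex.index_ne_zero (.of 1)
  refine IsFreeGroup.exists_surjective_freeGroup_two_of_not_commute
    (x := ⟨_, ha⟩) (y := ⟨_, hb⟩) fun h => ?_
  have := FreeGroup.not_commute_of_zero_zpow_of_one_zpow (m := m) (n := n) (by omega) (by omega)
  simp only [zpow_natCast] at this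
  exact this (h.map K.subtype)

theorem exists_index_subgroupOf_eq_pow {G : Type*} [Group G] {p : ℕ} (hp : p.Prime)
    {N : Subgroup G} [N.Normal] {k : ℕ} (hk : N.index = p ^ k) (H : Subgroup G) :
    ∃ i, (N.subgroupOf H).index = p ^ i := by
  obtain ⟨i, -, hi⟩ := (Nat.dvd_prime_pow hp).mp (hk ▸ N.relIndex_dvd_index_of_normal H)
  exact ⟨i, hi⟩

end Subgroup

theorem exists_surjective_freeGroup_two_of_finiteIndex_range {Γ Λ : Type*} [Group Γ] [Group Λ]
    {f : Γ →* FreeGroup (Fin 2)} (hf : Function.Surjective f) (ι : Λ →* Γ)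
    [ι.range.FiniteIndex] : ∃ g : Λ →* FreeGroup (Fin 2), Function.Surjective g := by
  have : (f.comp ι).range.FiniteIndex := by
    rw [MonoidHom.range_comp]
    exact .map_of_surjective hf _
  obtain ⟨φ, hφ⟩ := (f.comp ι).range.exists_surjective_freeGroup_two_of_finiteIndex
  exact ⟨φ.comp (f.comp ι).rangeRestrict, hφ.comp (f.comp ι).rangeRestrict_surjective⟩

/-- If `G` is `p`-large and `H ≤ G` has finite index, then `H` is `p`-large. -/
theorem pLarge_of_finiteIndex_subgroup {G : Type*} [Group G] (p : ℕ) (hp : p.Prime)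
    (hG : IsPLarge p G) (H : Subgroup G) (hH : H.FiniteIndex) :
    IsPLarge p H := by
  obtain ⟨N, hN, ⟨k, hk⟩, f, hf⟩ := hG
  refine ⟨N.subgroupOf H, hN.subgroupOf H, N.exists_index_subgroupOf_eq_pow hp hk H, ?_⟩
  let ι : N.subgroupOf H →* N :=
    (H.subtype.comp (N.subgroupOf H).subtype).codRestrict N fun x => x.2
  have hι : ι.range = H.subgroupOf N := by
    ext x
    exact ⟨by rintro ⟨y, rfl⟩; exact y.1.2, fun hx => ⟨⟨⟨x, hx⟩, x.2⟩, rfl⟩⟩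
  have : ι.range.FiniteIndex := hι ▸ inferInstance
  exact exists_surjective_freeGroup_two_of_finiteIndex_range hf ι
end

section
/- Any subnormal subgroup H of prime power index p^k in a group G contains a subgroup N of p-power index that is normal in G. -/
/-!
Along the subnormal series one gets a uniform exponent: if `K` is subnormal and
`x ^ n ∈ K` for all `x`, and `H ⊴ K`, then `x ^ (n * [K : H]) ∈ H`, because `K ⧸ H` has order
`[K : H]`. Hence every `x ^ (p ^ e)` lies in `H`, and with it in every conjugate of `H`, i.e. in
the normal core of `H`. The quotient of `G` by the core is therefore a finite `p`-group.
-/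

/-- `H` is normal in `K` (both viewed as subgroups of an ambient group):
`H ≤ K` and `K` normalises `H`. -/
def NormalIn {G : Type*} [Group G] (H K : Subgroup G) : Prop :=
  H ≤ K ∧ ∀ k ∈ K, ∀ h ∈ H, k * h * k⁻¹ ∈ H

/-- `H` is subnormal in `G`: there is a chain `H = H_n ⊴ H_{n-1} ⊴ ⋯ ⊴ H_0 = G`. -/
def Subnormal {G : Type*} [Group G] (H : Subgroup G) : Prop :=
  Relation.ReflTransGen NormalIn H ⊤

open Subgroup

section

variable {G : Type*} [Group G]

theorem NormalIn.normal_subgroupOf {H K : Subgroup G} (h : NormalIn H K) :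
    (H.subgroupOf K).Normal where
  conj_mem x hx g := h.2 g g.2 x hx

theorem NormalIn.pow_relIndex_mem {H K : Subgroup G} (h : NormalIn H K) {x : G} (hx : x ∈ K) :
    x ^ H.relIndex K ∈ H := by
  have := h.normal_subgroupOf
  have hquot : ((⟨x, hx⟩ : K) : K ⧸ H.subgroupOf K) ^ H.relIndex K = 1 := pow_card_eq_one'
  rwa [← QuotientGroup.mk_pow, QuotientGroup.eq_one_iff, mem_subgroupOf] at hquot

theorem Subnormal.exists_pow_index_pow_mem {H : Subgroup G} (hH : Subnormal H) :
    ∃ e : ℕ, ∀ x : G, x ^ H.index ^ e ∈ H := by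
  induction hH using Relation.ReflTransGen.head_induction_on with
  | refl => exact ⟨0, fun x => mem_top _⟩
  | @head H K hHK _ ih =>
    obtain ⟨e, he⟩ := ih
    refine ⟨e + 1, fun x => ?_⟩
    have hdvd : K.index ^ e * H.relIndex K ∣ H.index ^ (e + 1) :=
      pow_succ H.index e ▸ mul_dvd_mul (pow_dvd_pow_of_dvd (index_dvd_of_le hHK.1) e)
        (relIndex_dvd_index_of_le hHK.1)
    obtain ⟨c, hc⟩ := hdvd
    rw [hc, pow_mul, pow_mul]
    exact H.pow_mem (hHK.pow_relIndex_mem (he x)) c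

theorem Subgroup.pow_mem_normalCore {H : Subgroup G} {n : ℕ} (h : ∀ x : G, x ^ n ∈ H) (x : G) :
    x ^ n ∈ H.normalCore :=
  fun g => by simpa only [conj_pow] using h (g * x * g⁻¹)

theorem Subgroup.exists_index_eq_pow_of_pow_mem {p : ℕ} [Fact p.Prime] (N : Subgroup G)
    [N.Normal] [N.FiniteIndex] {e : ℕ} (h : ∀ x : G, x ^ p ^ e ∈ N) :
    ∃ m : ℕ, N.index = p ^ m := by
  have hpgroup : IsPGroup p (G ⧸ N) := by
    rintro ⟨x⟩
    exact ⟨e, (QuotientGroup.eq_one_iff _).2 (h x)⟩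
  exact IsPGroup.iff_card.1 hpgroup

end

/-- Any subnormal subgroup `H` of prime power index `p^k` in a group `G` contains a
subgroup `N` of `p`-power index which is normal in `G`. -/
theorem exists_normal_of_subnormal_prime_power_index {G : Type*} [Group G]
    (p k : ℕ) (hp : p.Prime) (H : Subgroup G) (hsn : Subnormal H)
    (hidx : H.index = p ^ k) :
    ∃ N : Subgroup G, N ≤ H ∧ N.Normal ∧ ∃ m : ℕ, N.index = p ^ m := by
  have := Fact.mk hp
  have : H.FiniteIndex := ⟨hidx ▸ pow_ne_zero k hp.ne_zero⟩
  obtain ⟨e, he⟩ := hsn.exists_pow_index_pow_mem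
  rw [hidx, ← pow_mul] at he
  exact ⟨H.normalCore, normalCore_le H, inferInstance,
    H.normalCore.exists_index_eq_pow_of_pow_mem (pow_mem_normalCore he)⟩
end

section
/- For prime p ≥ 7 and integers k ≥ 2, l ≥ 1 satisfying p(k-1) > l (the Puchta condition), we have l p^p < k^p (p-1)^{p-1}; consequently the polynomial F(t) = 1 - kt + l t^p takes a negative value for some t ∈ (0,1). -/
/-!
Write `q = p - 1`. Since `(1 + 1/q)^q < e < 3`, we have `p^p < 3 p q^q`, so the integer inequality
reduces to `3 l p ≤ k^p`; under the Puchta condition this is `3 p (p - 1) ≤ 2^p` when `k = 2`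
and follows from `3 p^2 ≤ 3^(p-1)` when `k ≥ 3`. At `t = p / ((p - 1) k)` one has `k t = 1 + 1/q`
and `l t^p = l p^p / (q^p k^p)`, so `F(t)` has the sign of `l p^p - k^p q^q`.
-/

lemma succ_pow_lt_three_mul_pow {q : ℕ} (hq : 1 ≤ q) : (q + 1) ^ q < 3 * q ^ q := by
  have hq' : (0 : ℝ) < q := by exact_mod_cast hq
  have hbound : (1 + (q : ℝ)⁻¹) ^ q < 3 :=
    Real.one_add_inv_pow_le_exp.trans_lt (Real.exp_one_lt_d9.trans (by norm_num))
  have hsplit : ((q : ℝ) + 1) ^ q = (1 + (q : ℝ)⁻¹) ^ q * (q : ℝ) ^ q := by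
    rw [← mul_pow, add_mul, inv_mul_cancel₀ hq'.ne', one_mul, add_comm]
  have : ((q : ℝ) + 1) ^ q < 3 * (q : ℝ) ^ q := by
    rw [hsplit]
    exact mul_lt_mul_of_pos_right hbound (by positivity)
  exact_mod_cast this

lemma three_mul_mul_pred_le_two_pow {n : ℕ} (hn : 7 ≤ n) : 3 * n * (n - 1) ≤ 2 ^ n := by
  induction n, hn using Nat.le_induction with
  | base => norm_num
  | succ n hn ih =>
    rw [pow_succ, Nat.add_sub_cancel]
    have : 3 * (n + 1) * n ≤ 2 * (3 * n * (n - 1)) := by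
      obtain ⟨m, rfl⟩ : ∃ m, n = m + 1 := ⟨n - 1, by omega⟩
      rw [Nat.add_sub_cancel]; nlinarith
    omega

lemma sq_le_three_pow {n : ℕ} (hn : 5 ≤ n) : n ^ 2 ≤ 3 ^ (n - 2) := by
  induction n, hn using Nat.le_induction with
  | base => norm_num
  | succ n hn ih =>
    rw [show n + 1 - 2 = n - 2 + 1 by omega, pow_succ 3]
    nlinarith

lemma mul_pow_lt_of_three_mul_le {n k l : ℕ} (hn : 2 ≤ n) (hl : 1 ≤ l)
    (h : 3 * l * n ≤ k ^ n) : l * n ^ n < k ^ n * (n - 1) ^ (n - 1) := by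
  obtain ⟨q, rfl⟩ : ∃ q, n = q + 1 := ⟨n - 1, by omega⟩
  rw [Nat.add_sub_cancel]
  have hpow := succ_pow_lt_three_mul_pow (show 1 ≤ q by omega)
  calc l * (q + 1) ^ (q + 1) = l * (q + 1) * (q + 1) ^ q := by ring
    _ < l * (q + 1) * (3 * q ^ q) := Nat.mul_lt_mul_of_pos_left hpow (by positivity)
    _ = 3 * l * (q + 1) * q ^ q := by ring
    _ ≤ k ^ (q + 1) * q ^ q := Nat.mul_le_mul_right _ h

lemma three_mul_mul_le_pow_of_lt {p k l : ℕ} (hp : 7 ≤ p) (hk : 2 ≤ k)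
    (hpuchta : l < p * (k - 1)) : 3 * l * p ≤ k ^ p := by
  rcases hk.eq_or_lt with rfl | hk3
  · have hl : l ≤ p - 1 := by omega
    calc 3 * l * p ≤ 3 * p * (p - 1) := by nlinarith
      _ ≤ 2 ^ p := three_mul_mul_pred_le_two_pow hp
  · have hsq : 3 * p ^ 2 ≤ 3 ^ (p - 1) := by
      rw [show p - 1 = p - 2 + 1 by omega, pow_succ 3]
      have := sq_le_three_pow (show 5 ≤ p by omega)
      omega
    calc 3 * l * p ≤ 3 * p ^ 2 * (k - 1) := by nlinarith
      _ ≤ 3 ^ (p - 1) * k := Nat.mul_le_mul hsq (Nat.sub_le k 1)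
      _ ≤ k ^ (p - 1) * k := Nat.mul_le_mul_right _ (Nat.pow_le_pow_left hk3 _)
      _ = k ^ p := by rw [← pow_succ, Nat.sub_add_cancel (by omega)]

lemma one_sub_mul_add_mul_pow_eq {n : ℕ} (hn : 2 ≤ n) {k l : ℝ} (hk : 0 < k) :
    1 - k * (n / ((n - 1) * k)) + l * (n / ((n - 1) * k)) ^ n
      = (l * n ^ n - k ^ n * (n - 1) ^ (n - 1)) / ((n - 1) ^ n * k ^ n) := by
  obtain ⟨m, rfl⟩ : ∃ m, n = m + 1 := ⟨n - 1, by omega⟩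
  have hm : (m : ℝ) ≠ 0 := by norm_cast; omega
  rw [Nat.add_sub_cancel]
  push_cast
  rw [add_sub_cancel_right, div_pow, mul_pow]
  field_simp
  ring

theorem puchta_implies_GS_general (p k l : ℕ) (hp7 : 7 ≤ p)
    (hk : 2 ≤ k) (hl : 1 ≤ l) (hpuchta : l < p * (k - 1)) :
    l * p ^ p < k ^ p * (p - 1) ^ (p - 1) ∧
    ∃ t : ℝ, 0 < t ∧ t < 1 ∧ 1 - (k : ℝ) * t + (l : ℝ) * t ^ p < 0 := by
  have hint := mul_pow_lt_of_three_mul_le (by omega) hl (three_mul_mul_le_pow_of_lt hp7 hk hpuchta)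
  have hreal : (l : ℝ) * p ^ p < k ^ p * ((p : ℝ) - 1) ^ (p - 1) := by
    have := (Nat.cast_lt (α := ℝ)).mpr hint
    push_cast [Nat.cast_sub (show 1 ≤ p by omega)] at this
    exact this
  have hk' : (2 : ℝ) ≤ k := by exact_mod_cast hk
  have hp' : (7 : ℝ) ≤ p := by exact_mod_cast hp7
  have hp1 : (0 : ℝ) < p - 1 := by linarith
  refine ⟨hint, p / ((p - 1) * k), by positivity, ?_, ?_⟩
  · rw [div_lt_one (by positivity)]
    nlinarith
  · rw [one_sub_mul_add_mul_pow_eq (by omega) (by positivity)]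
    exact div_neg_of_neg_of_pos (sub_neg.mpr hreal) (by positivity)

/-- For a prime `p ≥ 7` and integers `k ≥ 2`, `l ≥ 1` with `p(k-1) > l` (the Puchta
condition), we have `l p^p < k^p (p-1)^{p-1}`; consequently the Golod–Shafarevich
polynomial `F(t) = 1 - kt + l t^p` takes a negative value for some `t ∈ (0,1)`. -/
theorem puchta_implies_GS (p k l : ℕ) (hp : p.Prime) (hp7 : 7 ≤ p)
    (hk : 2 ≤ k) (hl : 1 ≤ l) (hpuchta : l < p * (k - 1)) :
    l * p ^ p < k ^ p * (p - 1) ^ (p - 1) ∧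
    ∃ t : ℝ, 0 < t ∧ t < 1 ∧ 1 - (k : ℝ) * t + (l : ℝ) * t ^ p < 0 :=
  puchta_implies_GS_general p k l hp7 hk hl hpuchta
end

section
/- Suppose P is a property of finitely generated groups preserved by quotients, finite index subgroups, finite index supergroups, and finite direct products. If a finitely generated group G has a finite index subgroup H that surjects onto an infinite group with P, then G itself surjects onto an infinite group with P. -/
/-!
Replace `H` by its normal core `N`: the image of `N` in the target of `H` has finite index, so
`N` also maps onto an infinite group with `P`, and as `N` is finitely generated this map can be
refined to a just infinite quotient `φ : N → Q`. The maps `x ↦ φ (g⁻¹ x g)`, one for each coset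
`g N`, embed `N / E` as a subdirect product `S ≤ Qⁿ`, where `E` is normal in `G`. The
coordinate subgroups `S ∩ Qᵢ` are normal in `Q`: if one of them is trivial the coordinate can be
dropped, and otherwise `S` contains their product, of finite index in `Qⁿ`. So `S` has `P`, and
`G / E`, which contains `N / E ≅ S` with finite index, is infinite and has `P`.
-/

universe u

structure Group.IsJustInfinite (K : Type*) [Group K] : Prop where
  infinite : Infinite K
  finiteIndex_of_ne_bot : ∀ W : Subgroup K, W.Normal → W ≠ ⊥ → W.FiniteIndex

theorem Subgroup.FG.sSup_mem_of_directedOn {G : Type*} [Group G] {c : Set (Subgroup G)}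
    (hne : c.Nonempty) (hc : DirectedOn (· ≤ ·) c) (hfg : (sSup c).FG) : sSup c ∈ c := by
  obtain ⟨S, hS⟩ := hfg
  have hS_sub : (S : Set G) ⊆ ⋃ N ∈ c, (N : Set G) := fun x hx => by
    have hx : x ∈ sSup c := hS ▸ subset_closure hx
    simpa [mem_sSup_of_directedOn hne hc] using hx
  obtain ⟨N, hNc, hSN⟩ := hc.exists_mem_subset_of_finset_subset_biUnion hne hS_sub
  have hle : sSup c ≤ N := hS ▸ (closure_le N).mpr hSN
  exact (le_antisymm hle (le_sSup hNc)).symm ▸ hNc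

namespace Group

variable {K : Type*} [Group K]

theorem isJustInfinite_quotient_of_maximal {M : Subgroup K} [M.Normal] (hM : Infinite (K ⧸ M))
    (hmax : ∀ M' : Subgroup K, M'.Normal → M < M' → Finite (K ⧸ M')) :
    IsJustInfinite (K ⧸ M) := by
  refine ⟨hM, fun W hW hW_ne => ?_⟩
  have hlt : M < W.comap (QuotientGroup.mk' M) := by
    refine lt_of_le_of_ne (QuotientGroup.le_comap_mk' M W) fun h => hW_ne ?_
    rw [← Subgroup.map_comap_eq_self_of_surjective (QuotientGroup.mk'_surjective M) W, ← h,
      QuotientGroup.map_mk'_self]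
  have := hmax _ (W.normal_comap _) hlt
  have hfi := (W.comap (QuotientGroup.mk' M)).finiteIndex_of_finite_quotient
  exact ⟨Subgroup.index_comap_of_surjective _ (QuotientGroup.mk'_surjective M) ▸ hfi.index_ne_zero⟩

theorem exists_isJustInfinite_quotient [FG K] [Infinite K] :
    ∃ (M : Subgroup K) (_ : M.Normal), IsJustInfinite (K ⧸ M) := by
  let s : Set (Subgroup K) := {M | M.Normal ∧ Infinite (K ⧸ M)}
  have hchain : ∀ c ⊆ s, IsChain (· ≤ ·) c → ∀ y ∈ c, ∃ ub ∈ s, ∀ z ∈ c, z ≤ ub := by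
    intro c hcs hc y hy
    have hnormal : (sSup c).Normal := Subgroup.sSup_normal c fun N hN => (hcs hN).1
    refine ⟨sSup c, ⟨hnormal, ?_⟩, fun z hz => le_sSup hz⟩
    by_contra hfin
    have : Finite (K ⧸ sSup c) := not_infinite_iff_finite.mp hfin
    have := (sSup c).finiteIndex_of_finite_quotient
    have hfg : (sSup c).FG := (Group.fg_iff_subgroup_fg _).mp (Subgroup.fg_of_index_ne_zero _)
    exact hfin (hcs (hfg.sSup_mem_of_directedOn ⟨y, hy⟩ hc.directedOn)).2
  have hbot : ⊥ ∈ s := ⟨inferInstance, QuotientGroup.quotientBot.toEquiv.infinite_iff.mpr ‹_›⟩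
  obtain ⟨M, -, ⟨hM_normal, hM_inf⟩, hM_max⟩ := zorn_le_nonempty₀ s hchain ⊥ hbot
  refine ⟨M, hM_normal, isJustInfinite_quotient_of_maximal hM_inf fun M' hM' hlt => ?_⟩
  by_contra hinf
  exact hlt.not_ge (hM_max ⟨hM', not_finite_iff_infinite.mp hinf⟩ hlt.le)

end Group

theorem Subgroup.finiteIndex_map_of_surjective {G G' : Type*} [Group G] [Group G'] {f : G →* G'}
    (hf : Function.Surjective f) (H : Subgroup G) [H.FiniteIndex] : (H.map f).FiniteIndex :=
  ⟨fun h0 => FiniteIndex.index_ne_zero (H := H) (Nat.eq_zero_of_zero_dvd (h0 ▸ H.index_map_dvd hf))⟩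

section SubdirectProduct

variable {ι Q : Type*} [Group Q] [DecidableEq ι]

theorem Subgroup.normal_comap_mulSingle (S : Subgroup (ι → Q)) {i : ι}
    (hS : Function.Surjective fun s : S => (s : ι → Q) i) :
    (S.comap (MonoidHom.mulSingle (fun _ => Q) i)).Normal := by
  refine ⟨fun k hk x => ?_⟩
  obtain ⟨s, rfl⟩ := hS x
  have hconj : (s : ι → Q) * Pi.mulSingle i k * (s : ι → Q)⁻¹
      = Pi.mulSingle i ((s : ι → Q) i * k * ((s : ι → Q) i)⁻¹) := by
    funext j
    by_cases hj : j = i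
    · subst hj; simp
    · simp [Pi.mulSingle_eq_of_ne hj]
  simpa [hconj] using S.mul_mem (S.mul_mem s.2 hk) (S.inv_mem s.2)

theorem Subgroup.eq_one_of_comap_mulSingle_eq_bot {S : Subgroup (ι → Q)} {i : ι}
    (hi : S.comap (MonoidHom.mulSingle (fun _ => Q) i) = ⊥) {s : ι → Q} (hs : s ∈ S)
    (h : ∀ j ≠ i, s j = 1) : s = 1 := by
  have hsingle : s = Pi.mulSingle i (s i) := by
    funext j
    by_cases hj : j = i
    · subst hj; simp
    · simp [Pi.mulSingle_eq_of_ne hj, h j hj]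
  have hsi : s i ∈ S.comap (MonoidHom.mulSingle (fun _ => Q) i) := by
    rw [Subgroup.mem_comap, MonoidHom.mulSingle_apply, ← hsingle]
    exact hs
  rw [hi, Subgroup.mem_bot] at hsi
  rw [hsingle, hsi, Pi.mulSingle_one]

end SubdirectProduct

section Conjugates

variable {G Q : Type*} [Group G] [Group Q] (N : Subgroup G) [N.Normal]

noncomputable def piConjugates (φ : N →* Q) : N →* (G ⧸ N → Q) :=
  MonoidHom.pi fun j => φ.comp (MulAut.conjNormal j.out⁻¹).toMonoidHom

variable {N}

-- Writing `g = k * j.out⁻¹` with `k ∈ N`, the `g`-conjugate is an `N`-conjugate of the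
-- `j.out⁻¹`-conjugate, and `ker φ` is normal in `N`.
theorem piConjugates_eq_one_iff (φ : N →* Q) (n : N) :
    piConjugates N φ n = 1 ↔ ∀ g : G, φ (MulAut.conjNormal g n) = 1 := by
  refine ⟨fun h g => ?_, fun h => funext fun j => h _⟩
  set j : G ⧸ N := QuotientGroup.mk g⁻¹
  obtain ⟨k, hk⟩ : ∃ k : N, j.out = g⁻¹ * k := QuotientGroup.mk_out_eq_mul N g⁻¹
  have hg : g = k * j.out⁻¹ := by rw [hk]; group
  have hj : φ (MulAut.conjNormal j.out⁻¹ n) = 1 := congrFun h j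
  rw [hg, map_mul, MulAut.conjNormal_val, MulAut.mul_apply, MulAut.conj_apply, map_mul, map_mul,
    hj, mul_one, ← map_mul, mul_inv_cancel, map_one]

theorem normal_map_ker_piConjugates (φ : N →* Q) :
    ((piConjugates N φ).ker.map N.subtype).Normal := by
  refine ⟨fun x hx g => ?_⟩
  obtain ⟨n, hn, rfl⟩ := Subgroup.mem_map.mp hx
  refine Subgroup.mem_map.mpr ⟨MulAut.conjNormal g n, ?_, rfl⟩
  rw [MonoidHom.mem_ker, piConjugates_eq_one_iff] at hn ⊢
  intro g'
  rw [← MulAut.mul_apply, ← map_mul]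
  exact hn _

theorem surjective_eval_range_piConjugates {φ : N →* Q} (hφ : Function.Surjective φ)
    (j : G ⧸ N) : Function.Surjective fun s : (piConjugates N φ).range => (s : G ⧸ N → Q) j := by
  intro q
  obtain ⟨n, rfl⟩ := hφ q
  refine ⟨(piConjugates N φ).rangeRestrict (MulAut.conjNormal j.out n), ?_⟩
  change φ (MulAut.conjNormal j.out⁻¹ (MulAut.conjNormal j.out n)) = φ n
  rw [← MulAut.mul_apply, ← map_mul, inv_mul_cancel, map_one, MulAut.one_apply]

end Conjugates

section ClosureProperties

variable {P : ∀ (G : Type u) [Group G], Prop}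
  (hquot : ∀ (G : Type u) [Group G] (K : Type u) [Group K] (f : G →* K),
    Function.Surjective f → P G → P K)
  (hsub : ∀ (G : Type u) [Group G] (H : Subgroup G), H.FiniteIndex → P G → P H)
  (hsup : ∀ (G : Type u) [Group G] (H : Subgroup G), H.FiniteIndex → P H → P G)
  (hprod : ∀ (G : Type u) [Group G] (K : Type u) [Group K], P G → P K → P (G × K))

include hquot in
theorem prop_of_mulEquiv {A B : Type u} [Group A] [Group B] (e : A ≃* B) (hA : P A) : P B :=
  hquot A B e.toMonoidHom e.surjective hA

include hquot hprod in
theorem prop_pi {Q : Type u} [Group Q] (hQ : P Q) (ι : Type u) [Finite ι] : P (ι → Q) := by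
  induction ι using Finite.induction_empty_option with
  | of_equiv e h => exact prop_of_mulEquiv hquot (MulEquiv.arrowCongr e (MulEquiv.refl Q)) h
  | h_empty => exact hquot Q _ 1 (fun _ => ⟨1, Subsingleton.elim _ _⟩) hQ
  | h_option h =>
    exact prop_of_mulEquiv hquot
      ({ Equiv.piOptionEquivProd with map_mul' := fun _ _ => rfl } : _ ≃* Q × _).symm
      (hprod _ _ hQ h)

include hquot hsub hprod in
theorem prop_of_subdirect {Q : Type u} [Group Q] (hQ : Group.IsJustInfinite Q) (hPQ : P Q)
    {ι : Type u} [Finite ι] (S : Subgroup (ι → Q))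
    (hS : ∀ i, Function.Surjective fun s : S => (s : ι → Q) i) [Infinite S] : P S := by
  classical
  induction h : Nat.card ι using Nat.strong_induction_on generalizing ι with
  | _ n ih =>
  let T i := S.comap (MonoidHom.mulSingle (fun _ => Q) i)
  by_cases hbot : ∃ i, T i = ⊥
  · obtain ⟨i, hi⟩ := hbot
    let r : S →* ({j // j ≠ i} → Q) := (MonoidHom.pi fun j => Pi.evalMonoidHom _ j.1).comp S.subtype
    have hinj : Function.Injective r := by
      refine (injective_iff_map_eq_one _).mpr fun s hs => Subtype.ext ?_
      exact S.eq_one_of_comap_mulSingle_eq_bot hi s.2 fun j hj => congrFun hs ⟨j, hj⟩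
    let e : S ≃* r.range := MonoidHom.ofInjective hinj
    have : Infinite r.range := Infinite.of_injective e e.injective
    refine prop_of_mulEquiv hquot e.symm (ih _ (h ▸ Finite.card_subtype_lt (x := i) (by simp)) _
      (fun j q => ?_) rfl)
    obtain ⟨s, hs⟩ := hS j q
    exact ⟨r.rangeRestrict s, hs⟩
  · have hT_fi i : (T i).FiniteIndex :=
      hQ.finiteIndex_of_ne_bot _ (S.normal_comap_mulSingle (hS i)) fun h => hbot ⟨i, h⟩
    have := Fintype.ofFinite ι
    have : (Subgroup.pi Set.univ T).FiniteIndex :=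
      ⟨by simpa [Subgroup.index_pi, Finset.prod_ne_zero_iff] using fun i => (hT_fi i).index_ne_zero⟩
    have : S.FiniteIndex := Subgroup.finiteIndex_of_le
      (Subgroup.pi_le_iff.mpr fun i => Subgroup.map_comap_le _ _)
    exact hsub _ S this (prop_pi hquot hprod hPQ ι)

def HasInfiniteQuotientWith (P : ∀ (G : Type u) [Group G], Prop) (A : Type u) [Group A] : Prop :=
  ∃ (L : Type u) (iL : Group L),
    letI := iL
    ∃ g : A →* L, Function.Surjective g ∧ Infinite L ∧ P L

namespace HasInfiniteQuotientWith

variable {A B : Type u} [Group A] [Group B]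

theorem of_mulEquiv (h : HasInfiniteQuotientWith P A) (e : B ≃* A) :
    HasInfiniteQuotientWith P B := by
  obtain ⟨L, _, g, hg, hL, hPL⟩ := h
  exact ⟨L, _, g.comp e.toMonoidHom, hg.comp e.surjective, hL, hPL⟩

include hsub in
theorem subgroup (h : HasInfiniteQuotientWith P A) (B : Subgroup A) [B.FiniteIndex] :
    HasInfiniteQuotientWith P B := by
  obtain ⟨L, _, g, hg, hL, hPL⟩ := h
  have hfi := B.finiteIndex_map_of_surjective hg
  have : Infinite (B.map g) := not_finite_iff_infinite.mp fun hfin =>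
    not_finite_iff_infinite.mpr hL ((B.map g).finite_iff_finite_and_finiteIndex.mpr ⟨hfin, hfi⟩)
  exact ⟨B.map g, _, g.subgroupMap B, g.subgroupMap_surjective B, this, hsub L _ hfi hPL⟩

include hquot in
theorem exists_isJustInfinite [Group.FG A] (h : HasInfiniteQuotientWith P A) :
    ∃ (Q : Type u) (_ : Group Q) (φ : A →* Q),
      Function.Surjective φ ∧ Group.IsJustInfinite Q ∧ P Q := by
  obtain ⟨L, _, g, hg, hL, hPL⟩ := h
  have : Group.FG L := Group.fg_of_surjective hg
  obtain ⟨M, _, hM⟩ := Group.exists_isJustInfinite_quotient (K := L)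
  exact ⟨L ⧸ M, _, (QuotientGroup.mk' M).comp g, (QuotientGroup.mk'_surjective M).comp hg, hM,
    hquot L _ _ (QuotientGroup.mk'_surjective M) hPL⟩

end HasInfiniteQuotientWith

include hquot hsup in
theorem hasInfiniteQuotientWith_of_normal_map_ker {G M : Type u} [Group G] [Group M]
    (N : Subgroup G) [N.FiniteIndex] (ψ : N →* M) (hker : (ψ.ker.map N.subtype).Normal)
    [Infinite ψ.range] (hP : P ψ.range) : HasInfiniteQuotientWith P G := by
  set E := ψ.ker.map N.subtype
  let c : N →* G ⧸ E := (QuotientGroup.mk' E).comp N.subtype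
  have hker_c : ψ.ker = c.ker := by
    rw [← MonoidHom.comap_ker, QuotientGroup.ker_mk',
      Subgroup.comap_map_eq_self_of_injective N.subtype_injective]
  let e : ψ.range ≃* c.range := (QuotientGroup.quotientKerEquivRange ψ).symm.trans
    ((QuotientGroup.quotientMulEquivOfEq hker_c).trans (QuotientGroup.quotientKerEquivRange c))
  have : Infinite c.range := Infinite.of_injective e e.injective
  have hfi : c.range.FiniteIndex := by
    rw [MonoidHom.range_comp, N.range_subtype]
    exact N.finiteIndex_map_of_surjective (QuotientGroup.mk'_surjective E)
  exact ⟨G ⧸ E, _, QuotientGroup.mk' E, QuotientGroup.mk'_surjective E,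
    Infinite.of_injective (Subtype.val : c.range → G ⧸ E) Subtype.val_injective,
    hsup _ c.range hfi (prop_of_mulEquiv hquot e hP)⟩

include hquot hsub hsup hprod in
theorem hasInfiniteQuotientWith_of_isJustInfinite {G Q : Type u} [Group G] [Group Q]
    (N : Subgroup G) [N.Normal] [N.FiniteIndex] {φ : N →* Q} (hφ : Function.Surjective φ)
    (hQ : Group.IsJustInfinite Q) (hPQ : P Q) : HasInfiniteQuotientWith P G := by
  have := hQ.infinite
  have : Infinite (piConjugates N φ).range :=
    Infinite.of_surjective _ (surjective_eval_range_piConjugates hφ 1)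
  exact hasInfiniteQuotientWith_of_normal_map_ker hquot hsup N _ (normal_map_ker_piConjugates φ)
    (prop_of_subdirect hquot hsub hprod hQ hPQ _ (surjective_eval_range_piConjugates hφ))

end ClosureProperties

/-- Suppose `P` is a property of groups preserved by quotients, finite index subgroups,
finite index supergroups, and finite direct products. If the finitely generated group `G`
has a finite index subgroup `H` mapping onto an infinite group with `P`, then `G` itself
maps onto an infinite group with `P`. -/
theorem surjects_onto_infinite_with_P
    (P : ∀ (G : Type u) [Group G], Prop)
    (hquot : ∀ (G : Type u) [Group G] (K : Type u) [Group K] (f : G →* K),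
      Function.Surjective f → P G → P K)
    (hsub : ∀ (G : Type u) [Group G] (H : Subgroup G), H.FiniteIndex → P G → P H)
    (hsup : ∀ (G : Type u) [Group G] (H : Subgroup G), H.FiniteIndex → P H → P G)
    (hprod : ∀ (G : Type u) [Group G] (K : Type u) [Group K], P G → P K → P (G × K))
    (G : Type u) [Group G] (hfg : Group.FG G)
    (H : Subgroup G) (hH : H.FiniteIndex)
    (hmaps : ∃ (K : Type u) (iK : Group K),
      letI := iK
      ∃ f : H →* K, Function.Surjective f ∧ Infinite K ∧ P K) :
    ∃ (L : Type u) (iL : Group L),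
      letI := iL
      ∃ g : G →* L, Function.Surjective g ∧ Infinite L ∧ P L := by
  have := hfg
  have := hH
  have hN : HasInfiniteQuotientWith P H.normalCore :=
    (HasInfiniteQuotientWith.subgroup hsub hmaps (H.normalCore.subgroupOf H)).of_mulEquiv
      (Subgroup.subgroupOfEquivOfLe H.normalCore_le).symm
  obtain ⟨Q, _, φ, hφ, hQ, hPQ⟩ := hN.exists_isJustInfinite hquot
  exact hasInfiniteQuotientWith_of_isJustInfinite hquot hsub hsup hprod H.normalCore hφ hQ hPQ
end

section
/- Let G be a finitely presented group with d generators, r relators, and p-deficiency 1 + ε with ε > 0; set k = d - r - 1. Then for all sufficiently large n, any subnormal subgroup G_n of index p^n obtained by iterated Puchta rewriting satisfies 4·def(G_n) + (d_p(G_n))^2 - 4·d_p(G_n) > 0, since this quantity is bounded below by the quadratic 4 + 4 p^n k + (p^n ε - 2)^2 - 4 in p^n, which has positive leading coefficient ε^2. -/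
open Filter

theorem eventually_atTop_quadratic_pos {a : ℝ} (ha : 0 < a) (b c : ℝ) :
    ∀ᶠ x in atTop, 0 < a * x ^ 2 + b * x + c := by
  have hlin : Tendsto (fun x : ℝ => a * x + b) atTop atTop :=
    tendsto_atTop_add_const_right _ b (tendsto_id.const_mul_atTop ha)
  have hquad : Tendsto (fun x : ℝ => x * (a * x + b) + c) atTop atTop :=
    tendsto_atTop_add_const_right _ c (tendsto_id.atTop_mul_atTop₀ hlin)
  filter_upwards [hquad.eventually_gt_atTop 0] with x hx
  linear_combination hx

theorem eventually_atTop_linear_add_sq_pos {ε : ℝ} (hε : 0 < ε) (k c : ℝ) :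
    ∀ᶠ x in atTop, 0 < 4 * x * k + (x * ε - c) ^ 2 := by
  filter_upwards [eventually_atTop_quadratic_pos (pow_pos hε 2) (4 * k - 2 * c * ε) (c ^ 2)]
    with x hx
  linear_combination hx

/-- Let `G` be finitely presented with `d` generators, `r` relators, `p`-deficiency
`1 + ε` (`ε > 0`), and `k = d - r - 1`. The iterated Puchta rewriting gives subnormal
subgroups `Gₙ` of index `pⁿ` with `def(Gₙ) ≥ pⁿ k + 1` and `d_p(Gₙ) ≥ pⁿ ε + 1`; then
for all sufficiently large `n`, `4·def(Gₙ) + d_p(Gₙ)² - 4·d_p(Gₙ) > 0` (the strongly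
Golod–Shafarevich condition), since this quantity is bounded below by the quadratic
`4 + 4 pⁿ k + (pⁿ ε - 2)² - 4` in `pⁿ`, which has positive leading coefficient `ε²`. -/
theorem strongly_GS_eventually (p : ℕ) (hp : p.Prime) (ε k : ℝ) (hε : 0 < ε)
    (D d : ℕ → ℝ)
    (hD : ∀ n, (p : ℝ) ^ n * k + 1 ≤ D n)
    (hd : ∀ n, (p : ℝ) ^ n * ε + 1 ≤ d n) :
    (∃ x₀ : ℝ, ∀ x : ℝ, x₀ ≤ x → 0 < 4 + 4 * x * k + (x * ε - 2) ^ 2 - 4) ∧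
    ∃ N : ℕ, ∀ n : ℕ, N ≤ n → 0 < 4 * D n + (d n) ^ 2 - 4 * d n := by
  have hpow : Tendsto (fun n : ℕ => (p : ℝ) ^ n) atTop atTop :=
    tendsto_pow_atTop_atTop_of_one_lt (by exact_mod_cast hp.one_lt)
  refine ⟨eventually_atTop.mp ?_, eventually_atTop.mp ?_⟩
  · filter_upwards [eventually_atTop_linear_add_sq_pos hε k 2] with x hx
    linarith
  -- `4 D + d² - 4 d = 4 (D - 1) + (d - 2)²`, and `d - 2 ≥ pⁿ ε - 1 ≥ 0` eventually.
  filter_upwards [hpow.eventually (eventually_atTop_linear_add_sq_pos hε k 1),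
    (hpow.atTop_mul_const hε).eventually_ge_atTop 1] with n hquad hone
  have hsq : ((p : ℝ) ^ n * ε - 1) ^ 2 ≤ (d n - 2) ^ 2 :=
    pow_le_pow_left₀ (by linarith) (by linarith [hd n]) 2
  linarith [hD n]
end

section
/- For an odd prime p > 3, the presentation ⟨x, y | x^p, y^p, (x^i y^j)^{p^2} for 1 ≤ i ≤ (p-1)/2, 1 ≤ j ≤ p-1⟩ has p-deficiency 2 - 2/p - (p-1)^2/(2p^2), and this quantity is strictly greater than 1 for all p ≥ 3. -/
/-- `ν_p(r)`: the largest `k` such that `r = w^(p^k)` for some `w` in the free group. -/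
noncomputable def nuP {X : Type*} (p : ℕ) (r : FreeGroup X) : ℕ :=
  sSup {k : ℕ | ∃ w : FreeGroup X, w ^ p ^ k = r}

/-- The `p`-deficiency of the presentation `⟨X | R⟩`:
`def_p = |X| - Σ_{r ∈ R} p^{-ν_p(r)}`. -/
noncomputable def pDef {X : Type*} [Fintype X] (p : ℕ) (R : Set (FreeGroup X)) : ℝ :=
  (Fintype.card X : ℝ) - ∑' r : R, ((p : ℝ) ^ (nuP p (r : FreeGroup X)))⁻¹

/-! Exponent sums `FreeGroup X → ℤ` detect `ν_p`: if some exponent sum of `w` is prime to `p`,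
then `w ^ p ^ k = v ^ p ^ m` forces `p ^ m ∣ p ^ k`, so `ν_p(w ^ p ^ k) = k`. Hence `ν_p(xᵖ) = 1` and
`ν_p((xⁱyʲ)^(p²)) = 2` (the `x`-exponent `i` is prime to `p`), and the same exponent sums show the
relators are pairwise distinct. Summing gives `2 - 2/p - ((p-1)/2)(p-1)/p²`; the inequality amounts
to `q² - 2q - 1 > 0`. -/

namespace FreeGroup

variable {X : Type*} [DecidableEq X]

def expSum (x : X) : FreeGroup X →* Multiplicative ℤ :=
  FreeGroup.lift fun y => Multiplicative.ofAdd (if y = x then 1 else 0)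

@[simp]
lemma toAdd_expSum_of (x y : X) : (expSum x (of y)).toAdd = if y = x then 1 else 0 := by
  simp [expSum]

lemma pow_mul_pow_pow_injective {x y : X} (hxy : x ≠ y) {n : ℕ} (hn : n ≠ 0) :
    Function.Injective fun ij : ℕ × ℕ => (of x ^ ij.1 * of y ^ ij.2) ^ n := by
  intro ij ij' h
  ext
  · simpa [toAdd_pow, hxy.symm, hn] using congrArg (fun g => (expSum x g).toAdd) h
  · simpa [toAdd_pow, hxy, hn] using congrArg (fun g => (expSum y g).toAdd) h

end FreeGroup

open FreeGroup

section NuP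

variable {X : Type*} {p : ℕ}

theorem nuP_pow_pow_of_not_dvd (hp : p.Prime) (φ : FreeGroup X →* Multiplicative ℤ)
    {w : FreeGroup X} (hw : ¬ (p : ℤ) ∣ (φ w).toAdd) (k : ℕ) : nuP p (w ^ p ^ k) = k := by
  refine IsGreatest.csSup_eq ⟨⟨w, rfl⟩, ?_⟩
  rintro m ⟨v, hv⟩
  have hφ : (p : ℤ) ^ m * (φ v).toAdd = (p : ℤ) ^ k * (φ w).toAdd := by
    simpa [toAdd_pow] using congrArg (fun g => (φ g).toAdd) hv
  have hdvd : (p : ℤ) ^ m ∣ (p : ℤ) ^ k :=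
    (Nat.prime_iff_prime_int.mp hp).pow_dvd_of_dvd_mul_right m hw ⟨_, hφ.symm⟩
  exact (Nat.pow_dvd_pow_iff_le_right hp.one_lt).mp (by exact_mod_cast hdvd)

theorem nuP_of_pow_self [DecidableEq X] (hp : p.Prime) (x : X) : nuP p (of x ^ p) = 1 := by
  have hw : ¬ (p : ℤ) ∣ (expSum x (of x)).toAdd := by
    simpa using (Int.natCast_dvd_natCast.not.mpr hp.not_dvd_one)
  simpa using nuP_pow_pow_of_not_dvd hp (expSum x) hw 1

theorem nuP_pow_mul_pow_pow_sq [DecidableEq X] (hp : p.Prime) {x y : X} (hxy : x ≠ y)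
    {i : ℕ} (hi : 0 < i) (hip : i < p) (j : ℕ) : nuP p ((of x ^ i * of y ^ j) ^ p ^ 2) = 2 := by
  have hw : ¬ (p : ℤ) ∣ (expSum x (of x ^ i * of y ^ j)).toAdd := by
    simpa [hxy.symm, Int.natCast_dvd_natCast] using Nat.not_dvd_of_pos_of_lt hi hip
  exact nuP_pow_pow_of_not_dvd hp (expSum x) hw 2

theorem pDef_coe_finset [Fintype X] (S : Finset (FreeGroup X)) :
    pDef p (S : Set (FreeGroup X)) = Fintype.card X - ∑ r ∈ S, ((p : ℝ) ^ nuP p r)⁻¹ := by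
  rw [pDef, Finset.tsum_subtype' S fun r => ((p : ℝ) ^ nuP p r)⁻¹]

end NuP

theorem one_lt_two_sub_two_div_sub_sq_div {q : ℝ} (hq : 3 ≤ q) :
    1 < 2 - 2 / q - (q - 1) ^ 2 / (2 * q ^ 2) := by
  have hgap : 2 - 2 / q - (q - 1) ^ 2 / (2 * q ^ 2) - 1 = (q ^ 2 - 2 * q - 1) / (2 * q ^ 2) := by
    field_simp
    ring
  have hpos : 0 < (q ^ 2 - 2 * q - 1) / (2 * q ^ 2) := by
    apply div_pos <;> nlinarith
  linarith

section GuptaSidki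

variable {p : ℕ}

def guptaSidkiPowerRelators (p : ℕ) : Finset (FreeGroup (Fin 2)) :=
  (Finset.Icc 1 ((p - 1) / 2) ×ˢ Finset.Icc 1 (p - 1)).image
    fun ij => (of 0 ^ ij.1 * of 1 ^ ij.2) ^ p ^ 2

theorem nuP_of_mem_guptaSidkiPowerRelators (hp : p.Prime) {r : FreeGroup (Fin 2)}
    (hr : r ∈ guptaSidkiPowerRelators p) : nuP p r = 2 := by
  simp only [guptaSidkiPowerRelators, Finset.mem_image, Finset.mem_product, Finset.mem_Icc] at hr
  obtain ⟨⟨i, j⟩, ⟨⟨hi, hip⟩, -⟩, rfl⟩ := hr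
  exact nuP_pow_mul_pow_pow_sq hp (by decide) hi (by omega) j

theorem card_guptaSidkiPowerRelators (hp : p ≠ 0) :
    (guptaSidkiPowerRelators p).card = (p - 1) / 2 * (p - 1) := by
  rw [guptaSidkiPowerRelators,
    Finset.card_image_of_injective _ (pow_mul_pow_pow_injective (by decide) (by positivity)),
    Finset.card_product, Nat.card_Icc, Nat.card_Icc, Nat.add_sub_cancel, Nat.add_sub_cancel]

theorem sum_inv_pow_nuP_guptaSidkiRelators (hp : p.Prime) :
    ∑ r ∈ insert (of 0 ^ p) (insert (of 1 ^ p) (guptaSidkiPowerRelators p)),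
        ((p : ℝ) ^ nuP p r)⁻¹ = 2 / p + ((p - 1) / 2 * (p - 1) : ℕ) / (p : ℝ) ^ 2 := by
  have hx : of 0 ^ p ∉ insert (of 1 ^ p) (guptaSidkiPowerRelators p) := by
    rw [Finset.mem_insert]
    rintro (h | h)
    · simpa [hp.ne_zero] using congrArg (fun g => (expSum 0 g).toAdd) h
    · simpa [nuP_of_pow_self hp] using nuP_of_mem_guptaSidkiPowerRelators hp h
  have hy : of 1 ^ p ∉ guptaSidkiPowerRelators p := fun h => by
    simpa [nuP_of_pow_self hp] using nuP_of_mem_guptaSidkiPowerRelators hp h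
  rw [Finset.sum_insert hx, Finset.sum_insert hy,
    Finset.sum_congr rfl fun r hr => by rw [nuP_of_mem_guptaSidkiPowerRelators hp hr],
    Finset.sum_const, card_guptaSidkiPowerRelators hp.ne_zero, nuP_of_pow_self hp,
    nuP_of_pow_self hp, nsmul_eq_mul]
  ring

theorem setOf_guptaSidkiRelators_eq (p : ℕ) :
    {r : FreeGroup (Fin 2) | r = of 0 ^ p ∨ r = of 1 ^ p ∨
      ∃ i j : ℕ, 1 ≤ i ∧ i ≤ (p - 1) / 2 ∧ 1 ≤ j ∧ j ≤ p - 1 ∧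
        r = (of 0 ^ i * of 1 ^ j) ^ p ^ 2} =
      ↑(insert (of 0 ^ p) (insert (of 1 ^ p) (guptaSidkiPowerRelators p))) := by
  ext r
  simp only [guptaSidkiPowerRelators, Set.mem_ofPred_eq, Finset.coe_insert, Set.mem_insert_iff,
    Finset.coe_image, Set.mem_image, Finset.mem_coe, Finset.mem_product, Finset.mem_Icc,
    Prod.exists]
  grind

end GuptaSidki

/-- For an odd prime `p > 3`, the presentation
`⟨x, y | xᵖ, yᵖ, (xⁱ yʲ)^(p²), 1 ≤ i ≤ (p-1)/2, 1 ≤ j ≤ p-1⟩` has `p`-deficiency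
`2 - 2/p - (p-1)²/(2p²)`, and this quantity is strictly greater than `1` for all
`p ≥ 3`. -/
theorem guptaSidki_presentation_pDef (p : ℕ) (hp : p.Prime) (hp3 : 3 < p) :
    pDef p {r : FreeGroup (Fin 2) |
        r = (FreeGroup.of 0) ^ p ∨ r = (FreeGroup.of 1) ^ p ∨
        ∃ i j : ℕ, 1 ≤ i ∧ i ≤ (p - 1) / 2 ∧ 1 ≤ j ∧ j ≤ p - 1 ∧
          r = ((FreeGroup.of 0) ^ i * (FreeGroup.of 1) ^ j) ^ (p ^ 2)} =
      2 - 2 / (p : ℝ) - ((p : ℝ) - 1) ^ 2 / (2 * (p : ℝ) ^ 2) ∧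
    ∀ q : ℝ, 3 ≤ q → 1 < 2 - 2 / q - (q - 1) ^ 2 / (2 * q ^ 2) := by
  refine ⟨?_, fun q => one_lt_two_sub_two_div_sub_sq_div⟩
  rw [setOf_guptaSidkiRelators_eq, pDef_coe_finset, sum_inv_pow_nuP_guptaSidkiRelators hp]
  -- the truncating `(p - 1) / 2` is exact only for odd `p`
  obtain ⟨k, rfl⟩ := hp.odd_of_ne_two (by omega)
  simp only [Fintype.card_fin, add_tsub_cancel_right, Nat.mul_div_cancel_left _ two_pos]
  push_cast
  field_simp
  ring
end
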